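/- For a bipartite finite-dimensional system H₁ ⊗ H₂, the function ρ ↦ S(Tr_{H₁} ρ) − E_f(ρ) is concave on the set of density operators: for states ρ, ρ' and 0 ≤ p ≤ 1, S(Tr_{H₁}(pρ+(1−p)ρ')) − E_f(pρ+(1−p)ρ') ≥ p[S(Tr_{H₁}ρ) − E_f(ρ)] + (1−p)[S(Tr_{H₁}ρ') − E_f(ρ')]. -/

import Mathlib

open scoped Matrix Kronecker ComplexOrder
open Matrix

noncomputable section

/-- Square complex matrices indexed by `d`. -/
abbrev Mat (d : Type) [Fintype d] : Type := Matrix d d ℂ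

/-- A density operator: positive semidefinite with unit trace. -/
def IsState {d : Type} [Fintype d] [DecidableEq d] (ρ : Mat d) : Prop :=
  ρ.PosSemidef ∧ ρ.trace = 1

/-- Von Neumann entropy `S(ρ) = -Tr ρ log ρ`, via eigenvalues (junk value 0
if `ρ` is not Hermitian). -/
def entropy {d : Type} [Fintype d] [DecidableEq d] (ρ : Mat d) : ℝ :=
  if h : ρ.IsHermitian then ∑ i, Real.negMulLog (h.eigenvalues i) else 0

/-- Partial trace over the first tensor factor. -/
def ptrace₁ {d₁ d₂ : Type} [Fintype d₁] [Fintype d₂] (ρ : Mat (d₁ × d₂)) : Mat d₂ :=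
  Matrix.of fun j j' => ∑ i, ρ (i, j) (i, j')

/-- Partial trace over the second tensor factor. -/
def ptrace₂ {d₁ d₂ : Type} [Fintype d₁] [Fintype d₂] (ρ : Mat (d₁ × d₂)) : Mat d₁ :=
  Matrix.of fun i i' => ∑ j, ρ (i, j) (i', j)

/-- The pure state (rank-one projector) `|v⟩⟨v|`. -/
def pureState {d : Type} [Fintype d] (v : d → ℂ) : Mat d :=
  Matrix.vecMulVec v (star v)

/-- `v` is a unit vector. -/
def UnitVec {d : Type} [Fintype d] (v : d → ℂ) : Prop :=
  ∑ i, ‖v i‖ ^ 2 = 1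

/-- Entropy of entanglement of a pure bipartite state. -/
def pureEnt {d₁ d₂ : Type} [Fintype d₁] [Fintype d₂] [DecidableEq d₁]
    (v : d₁ × d₂ → ℂ) : ℝ :=
  entropy (ptrace₂ (pureState v))

/-- Average entanglements of pure-state decompositions of `ρ`. -/
def efVals {d₁ d₂ : Type} [Fintype d₁] [Fintype d₂] [DecidableEq d₁]
    (ρ : Mat (d₁ × d₂)) : Set ℝ :=
  {x | ∃ (m : ℕ) (p : Fin m → ℝ) (v : Fin m → (d₁ × d₂ → ℂ)),
    (∀ i, 0 ≤ p i) ∧ (∀ i, UnitVec (v i)) ∧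
    ρ = ∑ i, (p i : ℂ) • pureState (v i) ∧
    x = ∑ i, p i * pureEnt (v i)}

/-- Entanglement of formation. -/
def Ef {d₁ d₂ : Type} [Fintype d₁] [Fintype d₂] [DecidableEq d₁]
    (ρ : Mat (d₁ × d₂)) : ℝ :=
  sInf (efVals ρ)

/-- Holevo quantities of pure-state input ensembles for the channel `T`. -/
def capVals {d d₂ : Type} [Fintype d] [Fintype d₂] [DecidableEq d₂]
    (T : Mat d → Mat d₂) : Set ℝ :=
  {x | ∃ (m : ℕ) (p : Fin m → ℝ) (v : Fin m → (d → ℂ)),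
    (∀ i, 0 ≤ p i) ∧ (∑ i, p i = 1) ∧ (∀ i, UnitVec (v i)) ∧
    x = entropy (∑ i, (p i : ℂ) • T (pureState (v i)))
        - ∑ i, p i * entropy (T (pureState (v i)))}

/-- Holevo capacity of the channel `T`. -/
def holevoCap {d d₂ : Type} [Fintype d] [Fintype d₂] [DecidableEq d₂]
    (T : Mat d → Mat d₂) : ℝ :=
  sSup (capVals T)

/-! ### Auxiliary lemmas -/

section Aux

variable {d : Type} [Fintype d] [DecidableEq d]

lemma entropy_eq {ρ : Mat d} (h : ρ.IsHermitian) :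
    entropy ρ = ∑ i, Real.negMulLog (h.eigenvalues i) := by
  simp only [entropy, dif_pos h]

lemma row_norm_one (W : Matrix d d ℂ) (hW : W * Wᴴ = 1) (i : d) :
    ∑ j, ‖W i j‖ ^ 2 = 1 := by
  have h1 : (W * Wᴴ) i i = (1 : Matrix d d ℂ) i i := by rw [hW]
  simp only [Matrix.mul_apply, Matrix.conjTranspose_apply, Matrix.one_apply_eq] at h1
  have h2 := congrArg Complex.re h1
  rw [Complex.re_sum] at h2
  simp only [Complex.star_def, Complex.mul_conj, Complex.ofReal_re, Complex.one_re] at h2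
  simp only [Complex.sq_norm]
  exact h2

/-- Mixing by a doubly stochastic (here: unitary-squared) matrix increases entropy. -/
lemma negMulLog_sum_le (W : Matrix d d ℂ) (hW : W ∈ Matrix.unitaryGroup d ℂ)
    (lam : d → ℝ) (hl : ∀ j, 0 ≤ lam j) :
    ∑ j, Real.negMulLog (lam j) ≤
      ∑ i, Real.negMulLog (∑ j, ‖W i j‖ ^ 2 * lam j) := by
  have hrow : ∀ i, ∑ j, ‖W i j‖ ^ 2 = 1 :=
    row_norm_one W ((Matrix.mem_unitaryGroup_iff).mp hW)
  have hcol : ∀ j, ∑ i, ‖W i j‖ ^ 2 = 1 := by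
    intro j
    have := row_norm_one Wᴴ (by
      rw [Matrix.conjTranspose_conjTranspose]
      exact (Matrix.mem_unitaryGroup_iff').mp hW) j
    simpa [Matrix.conjTranspose_apply, norm_star] using this
  calc ∑ j, Real.negMulLog (lam j)
      = ∑ j, (∑ i, ‖W i j‖ ^ 2) * Real.negMulLog (lam j) := by
        simp only [hcol, one_mul]
    _ = ∑ i, ∑ j, ‖W i j‖ ^ 2 * Real.negMulLog (lam j) := by
        rw [Finset.sum_comm]
        simp [Finset.sum_mul]
    _ ≤ ∑ i, Real.negMulLog (∑ j, ‖W i j‖ ^ 2 * lam j) := by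
        apply Finset.sum_le_sum
        intro i _
        have := Real.concaveOn_negMulLog.le_map_sum
          (t := Finset.univ) (w := fun j => ‖W i j‖ ^ 2) (p := lam)
          (fun j _ => by positivity) (hrow i) (fun j _ => hl j)
        simpa [smul_eq_mul] using this

/-- The entropy is at most the "diagonal entropy" in any orthonormal basis. -/
lemma entropy_le_diag (A : Mat d) (hA : A.PosSemidef) (V : Matrix d d ℂ)
    (hV : V ∈ Matrix.unitaryGroup d ℂ) :
    entropy A ≤ ∑ i, Real.negMulLog ((Vᴴ * A * V) i i).re := by
  set U : Mat d := (hA.1.eigenvectorUnitary : Mat d)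
  have hU : U ∈ Matrix.unitaryGroup d ℂ := hA.1.eigenvectorUnitary.2
  set W : Mat d := Vᴴ * U with hWdef
  have hWu : W ∈ Matrix.unitaryGroup d ℂ := by
    exact mul_mem (Matrix.star_eq_conjTranspose V ▸ Unitary.star_mem hV) hU
  have key : ∀ i, ((Vᴴ * A * V) i i).re = ∑ j, ‖W i j‖ ^ 2 * hA.1.eigenvalues j := by
    intro i
    have hA' : Vᴴ * A * V = W * Matrix.diagonal (Complex.ofReal ∘ hA.1.eigenvalues) * Wᴴ := by
      conv_lhs => rw [hA.1.spectral_theorem, Unitary.conjStarAlgAut_apply]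
      rw [hWdef]
      simp only [Matrix.conjTranspose_mul, Matrix.conjTranspose_conjTranspose,
        Matrix.star_eq_conjTranspose]
      noncomm_ring
    rw [hA']
    rw [Matrix.mul_apply]
    rw [Complex.re_sum]
    rw [Finset.sum_congr rfl (fun j _ => by
      rw [Matrix.mul_diagonal, Matrix.conjTranspose_apply])]
    apply Finset.sum_congr rfl
    intro j _
    have : W i j * (Complex.ofReal ∘ hA.1.eigenvalues) j * star (W i j)
        = Complex.ofReal (‖W i j‖ ^ 2 * hA.1.eigenvalues j) := by
      rw [mul_comm (W i j), mul_assoc,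
        show W i j * star (W i j) = W i j * (starRingEnd ℂ) (W i j) from rfl, Complex.mul_conj,
        Complex.normSq_eq_norm_sq]
      push_cast
      simp only [Function.comp]
      ring
    rw [this, Complex.ofReal_re]
  rw [entropy_eq hA.1]
  calc ∑ j, Real.negMulLog (hA.1.eigenvalues j)
      ≤ ∑ i, Real.negMulLog (∑ j, ‖W i j‖ ^ 2 * hA.1.eigenvalues j) :=
        negMulLog_sum_le W hWu _ (hA.eigenvalues_nonneg)
    _ = ∑ i, Real.negMulLog ((Vᴴ * A * V) i i).re := by
        simp only [key]

lemma psd_smul {A : Mat d} (hA : A.PosSemidef) {r : ℝ} (hr : 0 ≤ r) :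
    (r • A).PosSemidef := by
  refine Matrix.PosSemidef.of_dotProduct_mulVec_nonneg ?_ ?_
  · rw [Matrix.IsHermitian, Matrix.conjTranspose_smul, hA.1.eq, star_trivial]
  · intro x
    rw [Matrix.smul_mulVec, dotProduct_smul]
    have h0 : (0 : ℂ) ≤ (r : ℂ) := by exact_mod_cast hr
    have := hA.dotProduct_mulVec_nonneg x
    calc (0 : ℂ) = (r : ℂ) * 0 := by ring
      _ ≤ (r : ℂ) * (star x ⬝ᵥ A *ᵥ x) := by
          exact mul_le_mul_of_nonneg_left this h0
      _ = r • (star x ⬝ᵥ A *ᵥ x) := by rw [Complex.real_smul]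

lemma psd_diag_re_nonneg {A : Mat d} (hA : A.PosSemidef) (i : d) :
    0 ≤ (A i i).re := by
  have := hA.dotProduct_mulVec_nonneg (Pi.single i 1)
  simp only [dotProduct, Matrix.mulVec, dotProduct] at this
  have h : (0:ℂ) ≤ A i i := by
    simpa [Pi.single_apply, Finset.sum_ite_eq', dotProduct] using this
  exact (Complex.le_def.mp h).1

/-- Concavity of the von Neumann entropy. -/
lemma entropy_concave (A B : Mat d) (hA : A.PosSemidef) (hB : B.PosSemidef)
    (p : ℝ) (hp0 : 0 ≤ p) (hp1 : p ≤ 1) :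
    p * entropy A + (1 - p) * entropy B ≤ entropy (p • A + (1 - p) • B) := by
  set C : Mat d := p • A + (1 - p) • B with hCdef
  have hC : C.PosSemidef := (psd_smul hA hp0).add (psd_smul hB (by linarith))
  set V : Mat d := (hC.1.eigenvectorUnitary : Mat d) with hVdef
  have hV : V ∈ Matrix.unitaryGroup d ℂ := hC.1.eigenvectorUnitary.2
  have hdiagC : Vᴴ * C * V = Matrix.diagonal (Complex.ofReal ∘ hC.1.eigenvalues) := by
    rw [hVdef, ← Matrix.star_eq_conjTranspose]
    have := hC.1.conjStarAlgAut_star_eigenvectorUnitary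
    rw [Unitary.conjStarAlgAut_apply, Unitary.coe_star, star_star] at this
    exact this
  have hsplit : ∀ i, hC.1.eigenvalues i
      = p * ((Vᴴ * A * V) i i).re + (1 - p) * ((Vᴴ * B * V) i i).re := by
    intro i
    have h1 : Vᴴ * C * V = p • (Vᴴ * A * V) + (1 - p) • (Vᴴ * B * V) := by
      rw [hCdef]
      rw [Matrix.mul_add, Matrix.add_mul]
      congr 1 <;> rw [Matrix.mul_smul, Matrix.smul_mul]
    have h2 := congrArg (fun M : Mat d => (M i i).re) h1
    simp only [hdiagC] at h2
    simpa [Matrix.diagonal_apply_eq, Complex.add_re, Complex.real_smul,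
      Complex.mul_re, Complex.ofReal_re, Complex.ofReal_im] using h2
  have hApsd := hA.conjTranspose_mul_mul_same V
  have hBpsd := hB.conjTranspose_mul_mul_same V
  have hAd : ∀ i, 0 ≤ ((Vᴴ * A * V) i i).re := fun i => psd_diag_re_nonneg hApsd i
  have hBd : ∀ i, 0 ≤ ((Vᴴ * B * V) i i).re := fun i => psd_diag_re_nonneg hBpsd i
  rw [entropy_eq hC.1]
  have step1 : ∀ i, p * Real.negMulLog (((Vᴴ * A * V) i i).re)
      + (1 - p) * Real.negMulLog (((Vᴴ * B * V) i i).re)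
      ≤ Real.negMulLog (hC.1.eigenvalues i) := by
    intro i
    rw [hsplit i]
    have := Real.concaveOn_negMulLog.2 (Set.mem_Ici.mpr (hAd i)) (Set.mem_Ici.mpr (hBd i))
      hp0 (by linarith : (0:ℝ) ≤ 1 - p) (by ring)
    simpa [smul_eq_mul] using this
  calc p * entropy A + (1 - p) * entropy B
      ≤ p * (∑ i, Real.negMulLog (((Vᴴ * A * V) i i).re))
        + (1 - p) * (∑ i, Real.negMulLog (((Vᴴ * B * V) i i).re)) := by
        exact add_le_add
          (mul_le_mul_of_nonneg_left (entropy_le_diag A hA V hV) hp0)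
          (mul_le_mul_of_nonneg_left (entropy_le_diag B hB V hV) (by linarith))
    _ = ∑ i, (p * Real.negMulLog (((Vᴴ * A * V) i i).re)
        + (1 - p) * Real.negMulLog (((Vᴴ * B * V) i i).re)) := by
        rw [Finset.sum_add_distrib, Finset.mul_sum, Finset.mul_sum]
    _ ≤ ∑ i, Real.negMulLog (hC.1.eigenvalues i) := Finset.sum_le_sum fun i _ => step1 i

/-- Sum of eigenvalues equals the real part of the trace. -/
lemma sum_eigenvalues_eq (A : Mat d) (hA : A.IsHermitian) :
    ∑ i, hA.eigenvalues i = A.trace.re := by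
  have h : A.trace = Matrix.trace (Matrix.diagonal (Complex.ofReal ∘ hA.eigenvalues)) := by
    conv_lhs => rw [hA.spectral_theorem, Unitary.conjStarAlgAut_apply]
    rw [Matrix.trace_mul_cycle]
    rw [(Matrix.mem_unitaryGroup_iff').mp hA.eigenvectorUnitary.2, Matrix.one_mul]
    rfl
  rw [h, Matrix.trace_diagonal]
  rw [Complex.re_sum]
  simp

lemma entropy_nonneg_of_trace_one (A : Mat d) (hA : A.PosSemidef)
    (htr : A.trace = 1) : 0 ≤ entropy A := by
  rw [entropy_eq hA.1]
  have hsum : ∑ i, hA.1.eigenvalues i = 1 := by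
    rw [sum_eigenvalues_eq A hA.1, htr]; simp
  apply Finset.sum_nonneg
  intro i _
  apply Real.negMulLog_nonneg (hA.eigenvalues_nonneg i)
  calc hA.1.eigenvalues i ≤ ∑ j, hA.1.eigenvalues j := by
        exact Finset.single_le_sum (fun j _ => hA.eigenvalues_nonneg j) (Finset.mem_univ i)
    _ = 1 := hsum

end Aux

section Aux2

open scoped Pointwise

variable {d₁ d₂ : Type} [Fintype d₁] [Fintype d₂] [DecidableEq d₁] [DecidableEq d₂]

lemma pureState_posSemidef (v : d₁ → ℂ) : (pureState v).PosSemidef := by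
  refine Matrix.PosSemidef.of_dotProduct_mulVec_nonneg ?_ ?_
  · ext a b
    simp [pureState, Matrix.conjTranspose_apply, Matrix.vecMulVec_apply, mul_comm]
  · intro x
    have h : star x ⬝ᵥ (pureState v) *ᵥ x
        = star (star v ⬝ᵥ x) * (star v ⬝ᵥ x) := by
      simp only [dotProduct, Matrix.mulVec, pureState, Matrix.vecMulVec_apply,
        dotProduct, Pi.star_apply, star_sum, star_mul', star_star]
      rw [Finset.sum_mul]
      apply Finset.sum_congr rfl
      intro a _
      rw [Finset.mul_sum, Finset.mul_sum]
      apply Finset.sum_congr rfl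
      intro b _
      ring
    rw [h]
    exact star_mul_self_nonneg _

lemma pureState_trace (v : d₁ → ℂ) (hv : UnitVec v) : (pureState v).trace = 1 := by
  have : (pureState v).trace = ∑ i, v i * star (v i) := by
    simp [Matrix.trace, pureState, Matrix.vecMulVec_apply, Matrix.diag]
  rw [this]
  have : ∀ i, v i * star (v i) = (Complex.ofReal (‖v i‖ ^ 2)) := by
    intro i
    rw [Complex.star_def, Complex.mul_conj, Complex.normSq_eq_norm_sq]
  rw [Finset.sum_congr rfl fun i _ => this i, ← Complex.ofReal_sum, hv]
  simp

lemma ptrace₂_posSemidef {ρ : Mat (d₁ × d₂)} (h : ρ.PosSemidef) :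
    (ptrace₂ ρ).PosSemidef := by
  refine Matrix.PosSemidef.of_dotProduct_mulVec_nonneg ?_ ?_
  · ext a b
    simp only [Matrix.conjTranspose_apply, ptrace₂, Matrix.of_apply, star_sum]
    apply Finset.sum_congr rfl
    intro j _
    have := congrFun (congrFun h.1 (a, j)) (b, j)
    simpa [Matrix.conjTranspose_apply] using this
  · intro x
    have key : star x ⬝ᵥ (ptrace₂ ρ) *ᵥ x
        = ∑ j, star (fun ab : d₁ × d₂ => if ab.2 = j then x ab.1 else 0) ⬝ᵥ
            ρ *ᵥ (fun ab : d₁ × d₂ => if ab.2 = j then x ab.1 else 0) := by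
      simp only [dotProduct, Matrix.mulVec, ptrace₂, Matrix.of_apply, Pi.star_apply,
        Fintype.sum_prod_type, apply_ite (star : ℂ → ℂ), star_zero, mul_ite, ite_mul,
        zero_mul, mul_zero, dotProduct, Finset.sum_ite_eq', Finset.mem_univ, if_true,
        Finset.mul_sum, Finset.sum_mul]
      trans ∑ j : d₂, ∑ a : d₁, ∑ b : d₁, star (x a) * (ρ (a, j) (b, j) * x b)
      · calc ∑ a : d₁, ∑ b : d₁, ∑ j : d₂, star (x a) * (ρ (a, j) (b, j) * x b)
            = ∑ a : d₁, ∑ j : d₂, ∑ b : d₁, star (x a) * (ρ (a, j) (b, j) * x b) :=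
              Finset.sum_congr rfl fun a _ => Finset.sum_comm
          _ = ∑ j : d₂, ∑ a : d₁, ∑ b : d₁, star (x a) * (ρ (a, j) (b, j) * x b) :=
              Finset.sum_comm
      · apply Finset.sum_congr rfl; intro j _
        apply Finset.sum_congr rfl; intro a _
        rw [Finset.sum_comm]
        apply Finset.sum_congr rfl; intro b _
        simp [Finset.sum_ite_eq']
    rw [key]
    exact Finset.sum_nonneg fun j _ => h.dotProduct_mulVec_nonneg _

lemma ptrace₁_posSemidef {ρ : Mat (d₁ × d₂)} (h : ρ.PosSemidef) :
    (ptrace₁ ρ).PosSemidef := by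
  refine Matrix.PosSemidef.of_dotProduct_mulVec_nonneg ?_ ?_
  · ext a b
    simp only [Matrix.conjTranspose_apply, ptrace₁, Matrix.of_apply, star_sum]
    apply Finset.sum_congr rfl
    intro i _
    have := congrFun (congrFun h.1 (i, a)) (i, b)
    simpa [Matrix.conjTranspose_apply] using this
  · intro x
    have key : star x ⬝ᵥ (ptrace₁ ρ) *ᵥ x
        = ∑ i, star (fun ab : d₁ × d₂ => if ab.1 = i then x ab.2 else 0) ⬝ᵥ
            ρ *ᵥ (fun ab : d₁ × d₂ => if ab.1 = i then x ab.2 else 0) := by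
      simp only [dotProduct, Matrix.mulVec, ptrace₁, Matrix.of_apply, Pi.star_apply,
        Fintype.sum_prod_type_right, apply_ite (star : ℂ → ℂ), star_zero, mul_ite, ite_mul,
        zero_mul, mul_zero, dotProduct, Finset.sum_ite_eq', Finset.mem_univ, if_true,
        Finset.mul_sum, Finset.sum_mul]
      trans ∑ i : d₁, ∑ b : d₂, ∑ c : d₂, star (x b) * (ρ (i, b) (i, c) * x c)
      · calc ∑ b : d₂, ∑ c : d₂, ∑ i : d₁, star (x b) * (ρ (i, b) (i, c) * x c)
            = ∑ b : d₂, ∑ i : d₁, ∑ c : d₂, star (x b) * (ρ (i, b) (i, c) * x c) :=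
              Finset.sum_congr rfl fun b _ => Finset.sum_comm
          _ = ∑ i : d₁, ∑ b : d₂, ∑ c : d₂, star (x b) * (ρ (i, b) (i, c) * x c) :=
              Finset.sum_comm
      · apply Finset.sum_congr rfl; intro i _
        apply Finset.sum_congr rfl; intro b _
        rw [Finset.sum_comm]
        apply Finset.sum_congr rfl; intro c _
        simp [Finset.sum_ite_eq']
    rw [key]
    exact Finset.sum_nonneg fun i _ => h.dotProduct_mulVec_nonneg _

lemma ptrace₂_trace (ρ : Mat (d₁ × d₂)) : (ptrace₂ ρ).trace = ρ.trace := by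
  simp [Matrix.trace, ptrace₂, Matrix.diag, Fintype.sum_prod_type]

lemma ptrace₁_smul (r : ℝ) (ρ : Mat (d₁ × d₂)) : ptrace₁ (r • ρ) = r • ptrace₁ ρ := by
  ext j j'
  simp [ptrace₁, Finset.smul_sum]

lemma ptrace₁_add (ρ σ : Mat (d₁ × d₂)) : ptrace₁ (ρ + σ) = ptrace₁ ρ + ptrace₁ σ := by
  ext j j'
  simp [ptrace₁, Finset.sum_add_distrib]

lemma pureEnt_nonneg (v : d₁ × d₂ → ℂ) (hv : UnitVec v) : 0 ≤ pureEnt v := by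
  apply entropy_nonneg_of_trace_one _ (ptrace₂_posSemidef (pureState_posSemidef v))
  rw [ptrace₂_trace, pureState_trace _ hv]

lemma efVals_bddBelow (ρ : Mat (d₁ × d₂)) : BddBelow (efVals ρ) := by
  refine ⟨0, fun x hx => ?_⟩
  obtain ⟨m, p, v, hp, hv, -, hx⟩ := hx
  rw [hx]
  exact Finset.sum_nonneg fun i _ => mul_nonneg (hp i) (pureEnt_nonneg _ (hv i))

lemma efVals_nonneg {ρ : Mat (d₁ × d₂)} {x : ℝ} (hx : x ∈ efVals ρ) : 0 ≤ x := by
  obtain ⟨m, p, v, hp, hv, -, hx⟩ := hx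
  rw [hx]
  exact Finset.sum_nonneg fun i _ => mul_nonneg (hp i) (pureEnt_nonneg _ (hv i))

/-- Every state has a pure-state decomposition: `efVals` is nonempty. -/
lemma efVals_nonempty (ρ : Mat (d₁ × d₂)) (hρ : ρ.PosSemidef) :
    (efVals ρ).Nonempty := by
  classical
  set n := d₁ × d₂
  set U : Mat n := (hρ.1.eigenvectorUnitary : Mat n) with hUdef
  have hU : U ∈ Matrix.unitaryGroup n ℂ := hρ.1.eigenvectorUnitary.2
  set e : Fin (Fintype.card n) ≃ n := (Fintype.equivFin n).symm
  refine ⟨∑ i, hρ.1.eigenvalues (e i) * pureEnt (fun a => U a (e i)), ?_⟩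
  refine ⟨Fintype.card n, fun i => hρ.1.eigenvalues (e i),
    fun i a => U a (e i), fun i => hρ.eigenvalues_nonneg _, ?_, ?_, rfl⟩
  · intro i
    have := row_norm_one Uᴴ (by
      rw [Matrix.conjTranspose_conjTranspose]
      exact (Matrix.mem_unitaryGroup_iff').mp hU) (e i)
    simpa [UnitVec, Matrix.conjTranspose_apply, norm_star] using this
  · refine Eq.trans ?_
      (Equiv.sum_comp e (fun j => ((hρ.1.eigenvalues j : ℂ)) • pureState (fun a => U a j))).symm
    ext a b
    conv_lhs => rw [hρ.1.spectral_theorem, Unitary.conjStarAlgAut_apply]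
    simp only [Matrix.sum_apply, Matrix.smul_apply, pureState, Matrix.vecMulVec_apply,
      Matrix.mul_apply, Matrix.diagonal_apply, Matrix.star_apply, Function.comp,
      Pi.star_apply, smul_eq_mul, mul_ite, mul_zero, Finset.sum_ite_eq', Finset.mem_univ,
      if_true]
    apply Finset.sum_congr rfl
    intro j _
    show U a j * (hρ.1.eigenvalues j : ℂ) * star (U b j)
        = (hρ.1.eigenvalues j : ℂ) * (U a j * star (U b j))
    ring

lemma efVals_mix {ρ ρ' : Mat (d₁ × d₂)} {p : ℝ} (hp0 : 0 ≤ p) (hp1 : p ≤ 1)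
    {x x' : ℝ} (hx : x ∈ efVals ρ) (hx' : x' ∈ efVals ρ') :
    p * x + (1 - p) * x' ∈ efVals (p • ρ + (1 - p) • ρ') := by
  obtain ⟨m, q, v, hq, hv, hρeq, hxeq⟩ := hx
  obtain ⟨m', q', v', hq', hv', hρ'eq, hx'eq⟩ := hx'
  refine ⟨m + m', Fin.append (fun i => p * q i) (fun i => (1 - p) * q' i),
    Fin.append v v', ?_, ?_, ?_, ?_⟩
  · intro i
    refine Fin.addCases (fun j => ?_) (fun j => ?_) i
    · rw [Fin.append_left]; exact mul_nonneg hp0 (hq j)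
    · rw [Fin.append_right]; exact mul_nonneg (by linarith) (hq' j)
  · intro i
    refine Fin.addCases (fun j => ?_) (fun j => ?_) i
    · simp only [Fin.append_left]; exact hv j
    · simp only [Fin.append_right]; exact hv' j
  · rw [Fin.sum_univ_add]
    simp only [Fin.append_left, Fin.append_right, Complex.ofReal_mul, ← smul_smul]
    rw [← Finset.smul_sum, ← Finset.smul_sum, ← hρeq, ← hρ'eq]
    rw [show ((p : ℝ) : ℂ) = algebraMap ℝ ℂ p from rfl,
      show (((1 - p : ℝ)) : ℂ) = algebraMap ℝ ℂ (1 - p) from rfl,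
      algebraMap_smul, algebraMap_smul]
  · rw [Fin.sum_univ_add]
    simp only [Fin.append_left, Fin.append_right]
    rw [hxeq, hx'eq, Finset.mul_sum, Finset.mul_sum]
    congr 1 <;> exact Finset.sum_congr rfl fun i _ => by ring

lemma Ef_convex (ρ ρ' : Mat (d₁ × d₂)) (hρ : ρ.PosSemidef) (hρ' : ρ'.PosSemidef)
    (p : ℝ) (hp0 : 0 ≤ p) (hp1 : p ≤ 1) :
    Ef (p • ρ + (1 - p) • ρ') ≤ p * Ef ρ + (1 - p) * Ef ρ' := by
  have hne : (efVals ρ).Nonempty := efVals_nonempty ρ hρ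
  have hne' : (efVals ρ').Nonempty := efVals_nonempty ρ' hρ'
  have h1 : p * Ef ρ = sInf (p • efVals ρ) := by
    rw [Real.sInf_smul_of_nonneg hp0]; rfl
  have h2 : (1 - p) * Ef ρ' = sInf ((1 - p) • efVals ρ') := by
    rw [Real.sInf_smul_of_nonneg (by linarith)]; rfl
  rw [Ef, h1, h2, ← sub_le_iff_le_add]
  apply le_csInf (hne.smul_set)
  rintro a ⟨x, hx, rfl⟩
  rw [sub_le_iff_le_add, ← sub_le_iff_le_add']
  apply le_csInf (hne'.smul_set)
  rintro b ⟨x', hx', rfl⟩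
  have := csInf_le (efVals_bddBelow (p • ρ + (1 - p) • ρ'))
    (efVals_mix hp0 hp1 hx hx')
  simp only [smul_eq_mul]
  linarith

end Aux2

theorem stmt1
    {d₁ d₂ : Type} [Fintype d₁] [Fintype d₂] [DecidableEq d₁] [DecidableEq d₂]
    (ρ ρ' : Mat (d₁ × d₂)) (hρ : IsState ρ) (hρ' : IsState ρ')
    (p : ℝ) (hp0 : 0 ≤ p) (hp1 : p ≤ 1) :
    p * (entropy (ptrace₁ ρ) - Ef ρ) + (1 - p) * (entropy (ptrace₁ ρ') - Ef ρ')
      ≤ entropy (ptrace₁ (p • ρ + (1 - p) • ρ')) - Ef (p • ρ + (1 - p) • ρ') := by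
  have hE : p * entropy (ptrace₁ ρ) + (1 - p) * entropy (ptrace₁ ρ')
      ≤ entropy (ptrace₁ (p • ρ + (1 - p) • ρ')) := by
    rw [ptrace₁_add, ptrace₁_smul, ptrace₁_smul]
    exact entropy_concave _ _ (ptrace₁_posSemidef hρ.1) (ptrace₁_posSemidef hρ'.1) p hp0 hp1
  have hF : Ef (p • ρ + (1 - p) • ρ') ≤ p * Ef ρ + (1 - p) * Ef ρ' :=
    Ef_convex ρ ρ' hρ.1 hρ'.1 p hp0 hp1
  nlinarith [hE, hF]
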